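/- arXiv:1502.05758 — 3 statements merged into one kernel-verified Lean document; each statement's English description precedes it below -/
import Mathlib

section
/- Let u be a smooth solution of Δu = ∂ₜu + F'(u) on ℝⁿ × (−∞,0] with F ∈ C² and F > 0 on the range of u, and suppose |Du|² = 2F(u) with Du ≠ 0 everywhere. Define H(s) = ∫_{u₀}^{s} (2F(σ))^{−1/2} dσ for a fixed u₀ in the range of u, and set ν = H(u). Then ν solves the heat equation Δν = ∂ₜν and satisfies |Dν| ≡ 1. -/
open scoped BigOperators

noncomputable section

/-- The spatial gradient of a function `u(x,t)`. -/
def spatialGrad {n : ℕ} (u : EuclideanSpace ℝ (Fin n) × ℝ → ℝ)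
    (x : EuclideanSpace ℝ (Fin n)) (t : ℝ) : EuclideanSpace ℝ (Fin n) :=
  gradient (fun y => u (y, t)) x

/-- The spatial Laplacian of a function `u(x,t)`. -/
def spatialLap {n : ℕ} (u : EuclideanSpace ℝ (Fin n) × ℝ → ℝ)
    (x : EuclideanSpace ℝ (Fin n)) (t : ℝ) : ℝ :=
  ∑ i : Fin n, iteratedFDeriv ℝ 2 (fun y => u (y, t)) x
    ![EuclideanSpace.single i 1, EuclideanSpace.single i 1]

/-- The spatial Hessian matrix of a function `u(x,t)`. -/
def spatialHess {n : ℕ} (u : EuclideanSpace ℝ (Fin n) × ℝ → ℝ)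
    (x : EuclideanSpace ℝ (Fin n)) (t : ℝ) : Matrix (Fin n) (Fin n) ℝ :=
  fun i j => iteratedFDeriv ℝ 2 (fun y => u (y, t)) x
    ![EuclideanSpace.single i 1, EuclideanSpace.single j 1]

/-- The time derivative of a function `u(x,t)`. -/
def timeDeriv {n : ℕ} (u : EuclideanSpace ℝ (Fin n) × ℝ → ℝ)
    (x : EuclideanSpace ℝ (Fin n)) (t : ℝ) : ℝ :=
  deriv (fun s => u (x, s)) t


/-- The change-of-variable step in the proof of Theorem 6.1: if `Δu = ∂ₜu + F'(u)` on
`ℝⁿ × (−∞,0]` with `F > 0` on the range of `u`, the Modica equality `|Du|² = 2F(u)` holds and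
`Du ≠ 0` everywhere, then `ν = H(u)` with `H(s) = ∫_{u₀}^{s} (2F(σ))^{-1/2} dσ` solves the heat
equation and satisfies `|Dν| ≡ 1`. -/
theorem heat_equation_change_of_variable {n : ℕ}
    (u : EuclideanSpace ℝ (Fin n) × ℝ → ℝ) (F : ℝ → ℝ)
    (hu : ContDiff ℝ (⊤ : ℕ∞) u) (hF : ContDiff ℝ 2 F)
    (hFpos : ∀ p : EuclideanSpace ℝ (Fin n) × ℝ, p.2 ≤ 0 → 0 < F (u p))
    (heq : ∀ x t, t ≤ 0 → spatialLap u x t = timeDeriv u x t + deriv F (u (x, t)))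
    (hmodica : ∀ x t, t ≤ 0 → ‖spatialGrad u x t‖ ^ 2 = 2 * F (u (x, t)))
    (hDu : ∀ x t, t ≤ 0 → spatialGrad u x t ≠ 0)
    (u₀ : ℝ) (hu₀ : ∃ p : EuclideanSpace ℝ (Fin n) × ℝ, p.2 ≤ 0 ∧ u p = u₀)
    (H : ℝ → ℝ) (hH : ∀ s, H s = ∫ σ in u₀..s, (2 * F σ) ^ (-(1 : ℝ) / 2))
    (ν : EuclideanSpace ℝ (Fin n) × ℝ → ℝ) (hν : ∀ p, ν p = H (u p)) :
    ∀ x t, t ≤ 0 →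
      spatialLap ν x t = timeDeriv ν x t ∧ ‖spatialGrad ν x t‖ = 1 := by
  classical
  set g : ℝ → ℝ := fun σ => (2 * F σ) ^ (-(1 : ℝ) / 2) with hg_def
  -- F is positive on the whole segment between u₀ and any value of u
  have hrange : ∀ p : EuclideanSpace ℝ (Fin n) × ℝ, p.2 ≤ 0 →
      ∀ σ ∈ Set.uIcc u₀ (u p), 0 < F σ := by
    intro p hp σ hσ
    obtain ⟨q, hq, hq0⟩ := hu₀
    have hconv : Convex ℝ {p : EuclideanSpace ℝ (Fin n) × ℝ | p.2 ≤ 0} := by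
      intro a ha b hb s r hs hr hsr
      simp only [Set.mem_setOf_eq] at *
      have h2 : (s • a + r • b).2 = s * a.2 + r * b.2 := rfl
      rw [h2]
      nlinarith
    have hconn : IsPreconnected (u '' {p : EuclideanSpace ℝ (Fin n) × ℝ | p.2 ≤ 0}) :=
      (hconv.isPreconnected).image u (hu.continuous.continuousOn)
    have hsub : Set.uIcc u₀ (u p) ⊆ u '' {p : EuclideanSpace ℝ (Fin n) × ℝ | p.2 ≤ 0} :=
      hconn.ordConnected.uIcc_subset ⟨q, hq, hq0⟩ ⟨p, hp, rfl⟩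
    obtain ⟨r, hr, hrσ⟩ := hsub hσ
    rw [← hrσ]; exact hFpos r hr
  have hFc : Continuous F := hF.continuous
  set V : Set ℝ := F ⁻¹' Set.Ioi 0 with hV_def
  have hVopen : IsOpen V := isOpen_Ioi.preimage hFc
  have hgat : ∀ s ∈ V, ContinuousAt g s := by
    intro s hs
    have hs' : (0:ℝ) < F s := hs
    have h2 : (2 * F s) ≠ 0 := by positivity
    exact ((continuous_const.mul hFc).continuousAt).rpow_const (Or.inl h2)
  have hH' : ∀ s : ℝ, Set.uIcc u₀ s ⊆ V → HasDerivAt H (g s) s := by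
    intro s hsub
    have hfun : H = fun s => ∫ σ in u₀..s, g σ := funext hH
    rw [hfun]
    have hint : IntervalIntegrable g MeasureTheory.volume u₀ s :=
      (continuousOn_of_forall_continuousAt fun σ hσ => hgat σ (hsub hσ)).intervalIntegrable
    exact intervalIntegral.integral_hasDerivAt_right hint
      (ContinuousAt.stronglyMeasurableAtFilter hVopen hgat s (hsub Set.right_mem_uIcc))
      (hgat s (hsub Set.right_mem_uIcc))
  have hFd : Differentiable ℝ F := hF.differentiable (by norm_num)
  have hg' : ∀ s : ℝ, 0 < F s →
      HasDerivAt g (-(deriv F s) * (2 * F s) ^ (-(3 : ℝ) / 2)) s := by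
    intro s hs
    have h1 : HasDerivAt (fun σ => 2 * F σ) (2 * deriv F s) s :=
      ((hFd s).hasDerivAt).const_mul 2
    have h2pos : (0:ℝ) < 2 * F s := by positivity
    have h2 : HasDerivAt (fun x : ℝ => x ^ (-(1 : ℝ) / 2))
        ((-(1 : ℝ) / 2) * (2 * F s) ^ ((-(1 : ℝ) / 2) - 1)) (2 * F s) :=
      Real.hasDerivAt_rpow_const (Or.inl h2pos.ne')
    have h3 := h2.comp s h1
    have he : (-(1 : ℝ) / 2 - 1) = (-(3 : ℝ) / 2) := by norm_num
    rw [he] at h3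
    exact h3.congr_deriv (by ring)
  intro x t ht
  set f : EuclideanSpace ℝ (Fin n) → ℝ := fun y => u (y, t) with hf_def
  have hfx : f x = u (x, t) := rfl
  have hfC : ContDiff ℝ (⊤ : ℕ∞) f := hu.comp (contDiff_id.prodMk contDiff_const)
  have hfsub : ∀ y, Set.uIcc u₀ (f y) ⊆ V := by
    intro y σ hσ
    show (0:ℝ) < F σ
    exact hrange (y, t) ht σ hσ
  have hupos : ∀ y, 0 < F (f y) := fun y => hFpos (y, t) ht
  have hfd : ∀ y, HasFDerivAt f (fderiv ℝ f y) y :=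
    fun y => (hfC.differentiable (by simp) y).hasFDerivAt
  have hkey : ∀ y, HasFDerivAt (fun z => H (f z)) (g (f y) • fderiv ℝ f y) y :=
    fun y => (hH' (f y) (hfsub y)).comp_hasFDerivAt y (hfd y)
  have hgradf : fderiv ℝ f x = InnerProductSpace.toDual ℝ _ (spatialGrad u x t) := by
    have h0 : spatialGrad u x t = gradient f x := rfl
    rw [h0, gradient, LinearIsometryEquiv.apply_symm_apply]
  -- gradient of ν
  have hgradν : spatialGrad ν x t = g (u (x, t)) • spatialGrad u x t := by
    have h1 : (fun y => ν (y, t)) = fun z => H (f z) := funext fun z => hν (z, t)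
    have h2 := (hkey x).hasGradientAt
    have h3 : spatialGrad ν x t = (InnerProductSpace.toDual ℝ _).symm
        (g (f x) • fderiv ℝ f x) := by
      show gradient (fun y => ν (y, t)) x = _
      rw [h1]
      exact h2.gradient
    rw [h3, map_smulₛₗ]
    simp only [starRingEnd_apply, star_trivial]
    rfl
  have h2pos : (0:ℝ) < 2 * F (u (x, t)) := by have := hFpos (x, t) ht; positivity
  have hnorm2 : ‖spatialGrad u x t‖ ^ 2 = 2 * F (u (x, t)) := hmodica x t ht
  have hν_norm : ‖spatialGrad ν x t‖ = 1 := by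
    rw [hgradν, norm_smul]
    have hnn : (0:ℝ) ≤ g (u (x, t)) := Real.rpow_nonneg h2pos.le _
    rw [Real.norm_eq_abs, abs_of_nonneg hnn]
    have hsq : (g (u (x, t)) * ‖spatialGrad u x t‖) ^ 2 = 1 := by
      rw [mul_pow, hnorm2, hg_def]
      rw [← Real.rpow_natCast ((2 * F (u (x, t))) ^ (-(1 : ℝ) / 2)) 2,
        ← Real.rpow_mul h2pos.le]
      norm_num
      rw [Real.rpow_neg_one]
      field_simp
      exact div_self (hFpos (x, t) ht).ne'
    nlinarith [mul_nonneg hnn (norm_nonneg (spatialGrad u x t))]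
  -- time derivative
  have hc : HasDerivAt (fun s => u (x, s)) (timeDeriv u x t) t := by
    have hcC : ContDiff ℝ (⊤ : ℕ∞) (fun s : ℝ => u (x, s)) :=
      hu.comp (contDiff_const.prodMk contDiff_id)
    exact (hcC.differentiable (by simp) t).hasDerivAt
  have hsubt : Set.uIcc u₀ (u (x, t)) ⊆ V := hfsub x
  have htd : timeDeriv ν x t = g (u (x, t)) * timeDeriv u x t := by
    have h1 : (fun s => ν (x, s)) = fun s => H (u (x, s)) := funext fun s => hν (x, s)
    have h2 : HasDerivAt (fun s => H (u (x, s))) (g (u (x, t)) * timeDeriv u x t) t :=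
      (hH' (u (x, t)) hsubt).comp t hc
    show deriv (fun s => ν (x, s)) t = _
    rw [h1]
    exact h2.deriv
  -- Laplacian
  have hwd : ∀ y, HasFDerivAt (fun z => g (f z))
      ((-(deriv F (f y)) * (2 * F (f y)) ^ (-(3 : ℝ) / 2)) • fderiv ℝ f y) y :=
    fun y => (hg' (f y) (hupos y)).comp_hasFDerivAt y (hfd y)
  have hLC : ContDiff ℝ (⊤ : ℕ∞) (fderiv ℝ f) := hfC.fderiv_right (by simp)
  have hLd : HasFDerivAt (fderiv ℝ f) (fderiv ℝ (fderiv ℝ f) x) x :=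
    (hLC.differentiable (by simp) x).hasFDerivAt
  have hsmul : HasFDerivAt (fun y => g (f y) • fderiv ℝ f y)
      (g (f x) • fderiv ℝ (fderiv ℝ f) x +
        ((-(deriv F (f x)) * (2 * F (f x)) ^ (-(3 : ℝ) / 2)) • fderiv ℝ f x).smulRight
          (fderiv ℝ f x)) x :=
    (hwd x).smul hLd
  have hfderiv_eq : (fderiv ℝ fun z => H (f z)) = fun y => g (f y) • fderiv ℝ f y :=
    funext fun y => (hkey y).fderiv
  have e1 : ∀ i : Fin n,
      iteratedFDeriv ℝ 2 (fun y => ν (y, t)) x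
        ![EuclideanSpace.single i 1, EuclideanSpace.single i 1]
      = g (u (x, t)) * iteratedFDeriv ℝ 2 f x
          ![EuclideanSpace.single i 1, EuclideanSpace.single i 1]
        + (-(deriv F (u (x, t))) * (2 * F (u (x, t))) ^ (-(3 : ℝ) / 2)) *
          (fderiv ℝ f x (EuclideanSpace.single i 1)) ^ 2 := by
    intro i
    have h1 : (fun y => ν (y, t)) = fun z => H (f z) := funext fun z => hν (z, t)
    rw [h1, iteratedFDeriv_two_apply, hfderiv_eq, hsmul.fderiv, iteratedFDeriv_two_apply]
    simp only [Matrix.cons_val_zero, Matrix.cons_val_one, Matrix.head_cons,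
      ContinuousLinearMap.add_apply, ContinuousLinearMap.coe_smul', Pi.smul_apply,
      ContinuousLinearMap.smulRight_apply, smul_eq_mul, hfx]
    ring
  have hv : ∀ i, fderiv ℝ f x (EuclideanSpace.single i 1) = spatialGrad u x t i := by
    intro i
    rw [hgradf, InnerProductSpace.toDual_apply_apply]
    simp [EuclideanSpace.inner_single_right]
  have hsum : ∑ i, (fderiv ℝ f x (EuclideanSpace.single i 1)) ^ 2
      = ‖spatialGrad u x t‖ ^ 2 := by
    simp_rw [hv]
    rw [EuclideanSpace.norm_eq, Real.sq_sqrt (by positivity)]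
    simp [Real.norm_eq_abs, sq_abs]
  have hLap : spatialLap ν x t = g (u (x, t)) * spatialLap u x t +
      (-(deriv F (u (x, t))) * (2 * F (u (x, t))) ^ (-(3 : ℝ) / 2)) *
        ‖spatialGrad u x t‖ ^ 2 := by
    rw [show spatialLap ν x t = ∑ i : Fin n, iteratedFDeriv ℝ 2 (fun y => ν (y, t)) x
        ![EuclideanSpace.single i 1, EuclideanSpace.single i 1] from rfl]
    rw [Finset.sum_congr rfl fun i _ => e1 i, Finset.sum_add_distrib, ← Finset.mul_sum,
      ← Finset.mul_sum, hsum]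
    rfl
  refine ⟨?_, hν_norm⟩
  rw [hLap, htd, heq x t ht, hnorm2, hg_def]
  have hkey2 : 2 * F (u (x, t)) * (2 * F (u (x, t))) ^ (-(3 : ℝ) / 2)
      = (2 * F (u (x, t))) ^ (-(1 : ℝ) / 2) := by
    rw [show (-(1 : ℝ) / 2) = 1 + (-(3 : ℝ) / 2) by norm_num, Real.rpow_add h2pos,
      Real.rpow_one]
  linear_combination (-(deriv F (u (x, t)))) * hkey2


end
end

section
/- Let ν : ℝⁿ × (−∞,0] → ℝ be a smooth ancient solution of the heat equation Δν = ∂ₜν with |Dν| ≡ 1 on ℝⁿ × (−∞,0]. Then Dν is a constant vector a with |a| = 1, ∂ₜν ≡ 0, and there exists α ∈ ℝ such that ν(x,t) = ⟨a,x⟩ + α. -/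
open scoped BigOperators

noncomputable section

namespace AncientCaloricAux

open Set ContinuousLinearMap

variable {n : ℕ}

local notation "E" => EuclideanSpace ℝ (Fin n)
local notation "P" => EuclideanSpace ℝ (Fin n) × ℝ

/-- spatial basis direction in `P`. -/
def sdir (i : Fin n) : EuclideanSpace ℝ (Fin n) × ℝ := (EuclideanSpace.single i 1, 0)

/-- time direction in `P`. -/
def tdir : EuclideanSpace ℝ (Fin n) × ℝ := (0, 1)

section Helpers

variable {G : Type*} [NormedAddCommGroup G] [NormedSpace ℝ G]
  {F : Type*} [NormedAddCommGroup F] [NormedSpace ℝ F]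

lemma fderiv_zero_on_halfspace {g : P → G} {c : G}
    (hg : ContDiff ℝ (⊤ : ℕ∞) g) (h0 : ∀ (x : E) (t : ℝ), t ≤ 0 → g (x, t) = c) :
    ∀ (x : E) (t : ℝ), t ≤ 0 → fderiv ℝ g (x, t) = 0 := by
  have hcont : Continuous (fderiv ℝ g) := (hg.fderiv_right (m := (⊤ : ℕ∞)) (by simp)).continuous
  have hclosed : IsClosed {p : P | fderiv ℝ g p = 0} := isClosed_eq hcont continuous_const
  have hsub : ((univ : Set E) ×ˢ Iio (0:ℝ)) ⊆ {p : P | fderiv ℝ g p = 0} := by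
    rintro ⟨x, t⟩ ⟨-, ht⟩
    have hmem : ((univ : Set E) ×ˢ Iio (0:ℝ)) ∈ nhds ((x, t) : P) :=
      (isOpen_univ.prod isOpen_Iio).mem_nhds ⟨trivial, ht⟩
    have hev : g =ᶠ[nhds ((x, t) : P)] fun _ => c := by
      filter_upwards [hmem] with p hp
      exact h0 p.1 p.2 (le_of_lt hp.2)
    simp only [Set.mem_setOf_eq, hev.fderiv_eq, fderiv_fun_const]
    rfl
  have hcl := closure_minimal hsub hclosed
  intro x t ht
  apply hcl
  rw [closure_prod_eq, closure_univ, closure_Iio]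
  exact ⟨trivial, ht⟩

lemma const_on_halfspace {g : P → G}
    (hg : ContDiff ℝ (⊤ : ℕ∞) g) (h0 : ∀ (x : E) (t : ℝ), t ≤ 0 → fderiv ℝ g (x, t) = 0) :
    ∀ (x : E) (t : ℝ), t ≤ 0 → g (x, t) = g (0, 0) := by
  have hconv : Convex ℝ ((univ : Set E) ×ˢ Iic (0:ℝ)) := convex_univ.prod (convex_Iic 0)
  have hu : UniqueDiffOn ℝ ((univ : Set E) ×ˢ Iic (0:ℝ)) :=
    uniqueDiffOn_univ.prod (uniqueDiffOn_Iic 0)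
  have hdiff := hg.differentiable (by simp)
  intro x t ht
  have hxt : ((x, t) : P) ∈ ((univ : Set E) ×ˢ Iic (0:ℝ)) := ⟨trivial, ht⟩
  have h00 : ((0, 0) : P) ∈ ((univ : Set E) ×ˢ Iic (0:ℝ)) :=
    ⟨trivial, mem_Iic.mpr (le_refl 0)⟩
  refine hconv.is_const_of_fderivWithin_eq_zero hdiff.differentiableOn ?_ hxt h00
  rintro ⟨y, s⟩ hys
  rw [(hdiff _).fderivWithin (hu _ hys)]
  exact h0 y s hys.2

lemma hasFDerivAt_slice {u : P → F} (hu : Differentiable ℝ u) (x : E) (t : ℝ) :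
    HasFDerivAt (fun y : E => u (y, t))
      ((fderiv ℝ u (x, t)).comp (ContinuousLinearMap.inl ℝ (EuclideanSpace ℝ (Fin n)) ℝ)) x := by
  have h1 : HasFDerivAt (fun y : E => ((y, t) : P))
      (ContinuousLinearMap.inl ℝ (EuclideanSpace ℝ (Fin n)) ℝ) x :=
    (hasFDerivAt_id x).prodMk (hasFDerivAt_const t x)
  exact ((hu (x, t)).hasFDerivAt).comp x h1

lemma hasDerivAt_slice_t {u : P → F} (hu : Differentiable ℝ u) (x : E) (t : ℝ) :
    HasDerivAt (fun s : ℝ => u (x, s)) (fderiv ℝ u (x, t) tdir) t := by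
  have h1 : HasDerivAt (fun s : ℝ => ((x, s) : P)) ((0 : E), (1 : ℝ)) t :=
    (hasDerivAt_const t x).prodMk (hasDerivAt_id t)
  exact ((hu (x, t)).hasFDerivAt).comp_hasDerivAt t h1

lemma hasFDerivAt_eval {g : P → (F →L[ℝ] G)} (hg : Differentiable ℝ g) (c : F) (p : P) :
    HasFDerivAt (fun q => g q c)
      ((ContinuousLinearMap.apply ℝ G c).comp (fderiv ℝ g p)) p :=
  ((ContinuousLinearMap.apply ℝ G c).hasFDerivAt).comp p (hg p).hasFDerivAt

lemma clm_eq_zero_of_basis {A : P →L[ℝ] ℝ}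
    (h1 : ∀ j : Fin n, A (sdir j) = 0) (h2 : A tdir = 0) :
    A = 0 := by
  have hE : ∀ w : E, A (w, 0) = 0 := by
    have hL : (A.toLinearMap.comp (LinearMap.inl ℝ (EuclideanSpace ℝ (Fin n)) ℝ)) = 0 := by
      apply Module.Basis.ext (EuclideanSpace.basisFun (Fin n) ℝ).toBasis
      intro j
      simpa [EuclideanSpace.basisFun_apply, sdir] using h1 j
    intro w
    have := LinearMap.congr_fun hL w
    simpa using this
  refine ContinuousLinearMap.ext fun v => ?_
  obtain ⟨w, s⟩ := v
  have hv : ((w, s) : P) = (w, 0) + s • ((0 : E), (1 : ℝ)) := by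
    simp [Prod.ext_iff]
  rw [hv, map_add, map_smul, hE]
  have h2' : A ((0 : E), (1 : ℝ)) = 0 := h2
  rw [h2']
  simp

end Helpers

section Translate

variable {u : EuclideanSpace ℝ (Fin n) × ℝ → ℝ}

lemma timeDeriv_eq (hu : ContDiff ℝ (⊤ : ℕ∞) u) (x : E) (t : ℝ) :
    timeDeriv u x t = fderiv ℝ u (x, t) tdir :=
  (hasDerivAt_slice_t (hu.differentiable (by simp)) x t).deriv

lemma spatialGrad_apply (hu : ContDiff ℝ (⊤ : ℕ∞) u) (x : E) (t : ℝ) (i : Fin n) :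
    spatialGrad u x t i = fderiv ℝ u (x, t) (sdir i) := by
  have h1 : inner ℝ (spatialGrad u x t) (EuclideanSpace.single i (1:ℝ)) =
      fderiv ℝ (fun y => u (y, t)) x (EuclideanSpace.single i 1) := by
    simpa [spatialGrad, gradient] using
      (InnerProductSpace.toDual_symm_apply (𝕜 := ℝ)
        (y := fderiv ℝ (fun y => u (y, t)) x) (x := EuclideanSpace.single i (1:ℝ)))
  have h2 : inner ℝ (spatialGrad u x t) (EuclideanSpace.single i (1:ℝ)) = spatialGrad u x t i := by
    simp [PiLp.inner_apply, EuclideanSpace.single_apply]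
  rw [← h2, h1, (hasFDerivAt_slice (hu.differentiable (by simp)) x t).fderiv]
  rfl

lemma fderiv2_slice (hu : ContDiff ℝ (⊤ : ℕ∞) u) (x : E) (t : ℝ) (a b : E) :
    fderiv ℝ (fderiv ℝ (fun y : E => u (y, t))) x a b
      = fderiv ℝ (fderiv ℝ u) (x, t) (a, 0) (b, 0) := by
  set Φ : (P →L[ℝ] ℝ) →L[ℝ] ((EuclideanSpace ℝ (Fin n)) →L[ℝ] ℝ) :=
    (ContinuousLinearMap.compL ℝ (EuclideanSpace ℝ (Fin n)) (EuclideanSpace ℝ (Fin n) × ℝ) ℝ).flip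
      (ContinuousLinearMap.inl ℝ (EuclideanSpace ℝ (Fin n)) ℝ) with hΦ
  have hDdiff : Differentiable ℝ (fderiv ℝ u) :=
    (hu.fderiv_right (m := (⊤ : ℕ∞)) (by simp)).differentiable (by simp)
  have funeq : (fderiv ℝ (fun y : E => u (y, t)))
      = fun y : E => Φ (fderiv ℝ u (y, t)) := by
    funext y
    rw [(hasFDerivAt_slice (hu.differentiable (by simp)) y t).fderiv]
    simp [hΦ]
  have key : HasFDerivAt (fun y : E => Φ (fderiv ℝ u (y, t)))
      (Φ.comp ((fderiv ℝ (fderiv ℝ u) (x, t)).comp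
        (ContinuousLinearMap.inl ℝ (EuclideanSpace ℝ (Fin n)) ℝ))) x :=
    Φ.hasFDerivAt.comp x (hasFDerivAt_slice hDdiff x t)
  rw [funeq, key.fderiv]
  simp [hΦ]

lemma spatialLap_eq (hu : ContDiff ℝ (⊤ : ℕ∞) u) (x : E) (t : ℝ) :
    spatialLap u x t = ∑ i : Fin n, fderiv ℝ (fderiv ℝ u) (x, t) (sdir i) (sdir i) := by
  unfold spatialLap
  refine Finset.sum_congr rfl fun i _ => ?_
  rw [iteratedFDeriv_two_apply]
  simpa [sdir] using fderiv2_slice hu x t (EuclideanSpace.single i 1) (EuclideanSpace.single i 1)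

end Translate

section Core

variable {ν : EuclideanSpace ℝ (Fin n) × ℝ → ℝ}

lemma hasFDerivAt_eval2 {F G F' : Type*} [NormedAddCommGroup F] [NormedSpace ℝ F]
    [NormedAddCommGroup G] [NormedSpace ℝ G] [NormedAddCommGroup F'] [NormedSpace ℝ F']
    {g : P → (F →L[ℝ] (F' →L[ℝ] G))} (hg : Differentiable ℝ g) (c : F) (c' : F') (p : P) :
    HasFDerivAt (fun q => g q c c')
      ((ContinuousLinearMap.apply ℝ G c').comp
        (((ContinuousLinearMap.apply ℝ (F' →L[ℝ] G) c).comp (fderiv ℝ g p)))) p :=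
  ((ContinuousLinearMap.apply ℝ G c').hasFDerivAt).comp p (hasFDerivAt_eval hg c p)

lemma sum_sq_grad (hν : ContDiff ℝ (⊤ : ℕ∞) ν)
    (hgrad : ∀ x t, t ≤ 0 → ‖spatialGrad ν x t‖ = 1) :
    ∀ (x : E) (t : ℝ), t ≤ 0 →
      ∑ i : Fin n, fderiv ℝ ν (x, t) (sdir i) * fderiv ℝ ν (x, t) (sdir i) = 1 := by
  intro x t ht
  have h2 : (inner ℝ (spatialGrad ν x t) (spatialGrad ν x t) : ℝ) = 1 := by
    rw [real_inner_self_eq_norm_mul_norm, hgrad x t ht]; norm_num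
  have h3 : ∑ i : Fin n, spatialGrad ν x t i * spatialGrad ν x t i = 1 := by
    rw [PiLp.inner_apply] at h2; simpa [sq] using h2
  simpa [spatialGrad_apply hν] using h3

lemma E6 (hν : ContDiff ℝ (⊤ : ℕ∞) ν)
    (hgrad : ∀ x t, t ≤ 0 → ‖spatialGrad ν x t‖ = 1) :
    ∀ (x : E) (t : ℝ), t ≤ 0 → ∀ v : P,
      ∑ i : Fin n, fderiv ℝ ν (x, t) (sdir i) * fderiv ℝ (fderiv ℝ ν) (x, t) v (sdir i) = 0 := by
  have hD := hν.fderiv_right (m := (⊤ : ℕ∞)) (by simp)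
  have hDd := hD.differentiable (by simp)
  have hφs : ContDiff ℝ (⊤ : ℕ∞) (fun p : P => ∑ i : Fin n, fderiv ℝ ν p (sdir i) * fderiv ℝ ν p (sdir i)) :=
    ContDiff.sum fun i _ => (hD.clm_apply contDiff_const).mul (hD.clm_apply contDiff_const)
  have hφc := fderiv_zero_on_halfspace hφs (sum_sq_grad hν hgrad)
  intro x t ht v
  have hderiv : HasFDerivAt (fun p : P => ∑ i : Fin n, fderiv ℝ ν p (sdir i) * fderiv ℝ ν p (sdir i))
      (∑ i : Fin n, (fderiv ℝ ν (x, t) (sdir i) •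
          ((ContinuousLinearMap.apply ℝ ℝ (sdir i)).comp (fderiv ℝ (fderiv ℝ ν) (x, t)))
        + fderiv ℝ ν (x, t) (sdir i) •
          ((ContinuousLinearMap.apply ℝ ℝ (sdir i)).comp (fderiv ℝ (fderiv ℝ ν) (x, t))))) (x, t) :=
    HasFDerivAt.fun_sum fun i _ =>
      (hasFDerivAt_eval hDd (sdir i) (x, t)).mul (hasFDerivAt_eval hDd (sdir i) (x, t))
  have h0 : fderiv ℝ (fun p : P => ∑ i : Fin n, fderiv ℝ ν p (sdir i) * fderiv ℝ ν p (sdir i)) (x, t) = 0 :=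
    hφc x t ht
  rw [hderiv.fderiv] at h0
  have h0v := congrArg (fun A : (EuclideanSpace ℝ (Fin n) × ℝ) →L[ℝ] ℝ => A v) h0
  simp only [ContinuousLinearMap.sum_apply, ContinuousLinearMap.add_apply,
    ContinuousLinearMap.coe_smul', Pi.smul_apply, ContinuousLinearMap.coe_comp',
    Function.comp_apply, ContinuousLinearMap.apply_apply, ContinuousLinearMap.zero_apply,
    smul_eq_mul] at h0v
  have h2 : (2:ℝ) * ∑ i : Fin n, fderiv ℝ ν (x, t) (sdir i) * fderiv ℝ (fderiv ℝ ν) (x, t) v (sdir i) = 0 := by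
    rw [Finset.mul_sum]
    simpa [two_mul] using h0v
  linarith

lemma E7 (hν : ContDiff ℝ (⊤ : ℕ∞) ν)
    (hheat : ∀ x t, t ≤ 0 → spatialLap ν x t = timeDeriv ν x t) :
    ∀ (x : E) (t : ℝ), t ≤ 0 → ∀ v : P,
      ∑ i : Fin n, fderiv ℝ (fderiv ℝ (fderiv ℝ ν)) (x, t) v (sdir i) (sdir i)
        = fderiv ℝ (fderiv ℝ ν) (x, t) v tdir := by
  have hD := hν.fderiv_right (m := (⊤ : ℕ∞)) (by simp)
  have hB := hD.fderiv_right (m := (⊤ : ℕ∞)) (by simp)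
  have hDd := hD.differentiable (by simp)
  have hBd := hB.differentiable (by simp)
  have hχs : ContDiff ℝ (⊤ : ℕ∞) (fun p : P =>
      (∑ i : Fin n, fderiv ℝ (fderiv ℝ ν) p (sdir i) (sdir i)) - fderiv ℝ ν p tdir) :=
    (ContDiff.sum fun i _ => (hB.clm_apply contDiff_const).clm_apply contDiff_const).sub
      (hD.clm_apply contDiff_const)
  have hχ0 : ∀ (x : E) (t : ℝ), t ≤ 0 →
      (∑ i : Fin n, fderiv ℝ (fderiv ℝ ν) (x, t) (sdir i) (sdir i)) - fderiv ℝ ν (x, t) tdir = 0 := by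
    intro x t ht
    have := hheat x t ht
    rw [spatialLap_eq hν, timeDeriv_eq hν] at this
    rw [this]; ring
  have hχc := fderiv_zero_on_halfspace hχs hχ0
  intro x t ht v
  have hderiv : HasFDerivAt (fun p : P =>
      (∑ i : Fin n, fderiv ℝ (fderiv ℝ ν) p (sdir i) (sdir i)) - fderiv ℝ ν p tdir)
      ((∑ i : Fin n, (ContinuousLinearMap.apply ℝ ℝ (sdir i)).comp
          (((ContinuousLinearMap.apply ℝ ((EuclideanSpace ℝ (Fin n) × ℝ) →L[ℝ] ℝ) (sdir i)).comp
            (fderiv ℝ (fderiv ℝ (fderiv ℝ ν)) (x, t)))))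
        - (ContinuousLinearMap.apply ℝ ℝ tdir).comp (fderiv ℝ (fderiv ℝ ν) (x, t))) (x, t) :=
    (HasFDerivAt.fun_sum fun i _ => hasFDerivAt_eval2 hBd (sdir i) (sdir i) (x, t)).sub
      (hasFDerivAt_eval hDd tdir (x, t))
  have h0 := hχc x t ht
  rw [hderiv.fderiv] at h0
  have h0v := congrArg (fun A : (EuclideanSpace ℝ (Fin n) × ℝ) →L[ℝ] ℝ => A v) h0
  simp only [ContinuousLinearMap.sub_apply, ContinuousLinearMap.sum_apply,
    ContinuousLinearMap.coe_comp', Function.comp_apply, ContinuousLinearMap.apply_apply,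
    ContinuousLinearMap.zero_apply] at h0v
  linarith

lemma E8 (hν : ContDiff ℝ (⊤ : ℕ∞) ν)
    (hgrad : ∀ x t, t ≤ 0 → ‖spatialGrad ν x t‖ = 1) :
    ∀ (x : E) (t : ℝ), t ≤ 0 → ∀ (j : Fin n) (v : EuclideanSpace ℝ (Fin n) × ℝ),
      ∑ i : Fin n, (fderiv ℝ ν (x, t) (sdir i)
          * fderiv ℝ (fderiv ℝ (fderiv ℝ ν)) (x, t) v (sdir j) (sdir i)
        + fderiv ℝ (fderiv ℝ ν) (x, t) (sdir j) (sdir i)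
          * fderiv ℝ (fderiv ℝ ν) (x, t) v (sdir i)) = 0 := by
  have hD := hν.fderiv_right (m := (⊤ : ℕ∞)) (by simp)
  have hB := hD.fderiv_right (m := (⊤ : ℕ∞)) (by simp)
  have hDd := hD.differentiable (by simp)
  have hBd := hB.differentiable (by simp)
  intro x t ht j v
  have hρs : ContDiff ℝ (⊤ : ℕ∞) (fun p : P =>
      ∑ i : Fin n, fderiv ℝ ν p (sdir i) * fderiv ℝ (fderiv ℝ ν) p (sdir j) (sdir i)) :=
    ContDiff.sum fun i _ => (hD.clm_apply contDiff_const).mul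
      ((hB.clm_apply contDiff_const).clm_apply contDiff_const)
  have hρ0 : ∀ (x : E) (t : ℝ), t ≤ 0 →
      (fun p : P => ∑ i : Fin n, fderiv ℝ ν p (sdir i)
        * fderiv ℝ (fderiv ℝ ν) p (sdir j) (sdir i)) (x, t) = 0 := by
    intro x t ht
    exact E6 hν hgrad x t ht (sdir j)
  have hρc := fderiv_zero_on_halfspace hρs hρ0
  have hderiv : HasFDerivAt (fun p : P =>
      ∑ i : Fin n, fderiv ℝ ν p (sdir i) * fderiv ℝ (fderiv ℝ ν) p (sdir j) (sdir i))
      (∑ i : Fin n, (fderiv ℝ ν (x, t) (sdir i) •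
          ((ContinuousLinearMap.apply ℝ ℝ (sdir i)).comp
            (((ContinuousLinearMap.apply ℝ ((EuclideanSpace ℝ (Fin n) × ℝ) →L[ℝ] ℝ) (sdir j)).comp
              (fderiv ℝ (fderiv ℝ (fderiv ℝ ν)) (x, t)))))
        + fderiv ℝ (fderiv ℝ ν) (x, t) (sdir j) (sdir i) •
          ((ContinuousLinearMap.apply ℝ ℝ (sdir i)).comp (fderiv ℝ (fderiv ℝ ν) (x, t))))) (x, t) :=
    HasFDerivAt.fun_sum fun i _ =>
      (hasFDerivAt_eval hDd (sdir i) (x, t)).mul (hasFDerivAt_eval2 hBd (sdir j) (sdir i) (x, t))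
  have h0 := hρc x t ht
  rw [hderiv.fderiv] at h0
  have h0v := congrArg (fun A : (EuclideanSpace ℝ (Fin n) × ℝ) →L[ℝ] ℝ => A v) h0
  simpa only [ContinuousLinearMap.sum_apply, ContinuousLinearMap.add_apply,
    ContinuousLinearMap.coe_smul', Pi.smul_apply, ContinuousLinearMap.coe_comp',
    Function.comp_apply, ContinuousLinearMap.apply_apply, ContinuousLinearMap.zero_apply,
    smul_eq_mul] using h0v

lemma Bsymm (hν : ContDiff ℝ (⊤ : ℕ∞) ν) (p : P) (v w : EuclideanSpace ℝ (Fin n) × ℝ) :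
    fderiv ℝ (fderiv ℝ ν) p v w = fderiv ℝ (fderiv ℝ ν) p w v := by
  have hD := hν.fderiv_right (m := (⊤ : ℕ∞)) (by simp)
  exact second_derivative_symmetric (fun y => (hν.differentiable (by simp) y).hasFDerivAt)
    ((hD.differentiable (by simp) p).hasFDerivAt) v w

lemma Tsymm12 (hν : ContDiff ℝ (⊤ : ℕ∞) ν) (p : P) (u v w : EuclideanSpace ℝ (Fin n) × ℝ) :
    fderiv ℝ (fderiv ℝ (fderiv ℝ ν)) p u v w = fderiv ℝ (fderiv ℝ (fderiv ℝ ν)) p v u w := by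
  have hD := hν.fderiv_right (m := (⊤ : ℕ∞)) (by simp)
  have hB := hD.fderiv_right (m := (⊤ : ℕ∞)) (by simp)
  have h := second_derivative_symmetric (f := fderiv ℝ ν)
    (fun y => (hD.differentiable (by simp) y).hasFDerivAt)
    ((hB.differentiable (by simp) p).hasFDerivAt) u v
  exact congrArg (fun A : (EuclideanSpace ℝ (Fin n) × ℝ) →L[ℝ] ℝ => A w) h

lemma Tsymm23 (hν : ContDiff ℝ (⊤ : ℕ∞) ν) (p : P) (u v w : EuclideanSpace ℝ (Fin n) × ℝ) :
    fderiv ℝ (fderiv ℝ (fderiv ℝ ν)) p u v w = fderiv ℝ (fderiv ℝ (fderiv ℝ ν)) p u w v := by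
  have hD := hν.fderiv_right (m := (⊤ : ℕ∞)) (by simp)
  have hB := hD.fderiv_right (m := (⊤ : ℕ∞)) (by simp)
  have hBd := hB.differentiable (by simp)
  have e : (fun q : P => fderiv ℝ (fderiv ℝ ν) q v w)
      = (fun q : P => fderiv ℝ (fderiv ℝ ν) q w v) := funext fun q => Bsymm hν q v w
  have h1 := (hasFDerivAt_eval2 hBd v w p).fderiv
  have h2 := (hasFDerivAt_eval2 hBd w v p).fderiv
  rw [e] at h1
  rw [h1] at h2
  have h3 := congrArg (fun A : (EuclideanSpace ℝ (Fin n) × ℝ) →L[ℝ] ℝ => A u) h2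
  simpa using h3

end Core

section Vanish

variable {ν : EuclideanSpace ℝ (Fin n) × ℝ → ℝ}

lemma Bzero (hν : ContDiff ℝ (⊤ : ℕ∞) ν)
    (hheat : ∀ x t, t ≤ 0 → spatialLap ν x t = timeDeriv ν x t)
    (hgrad : ∀ x t, t ≤ 0 → ‖spatialGrad ν x t‖ = 1) :
    ∀ (x : E) (t : ℝ), t ≤ 0 → ∀ i j : Fin n,
      fderiv ℝ (fderiv ℝ ν) (x, t) (sdir j) (sdir i) = 0 := by
  intro x t ht
  have hsum : ∑ j : Fin n, ∑ i : Fin n,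
      fderiv ℝ (fderiv ℝ ν) (x, t) (sdir j) (sdir i)
        * fderiv ℝ (fderiv ℝ ν) (x, t) (sdir j) (sdir i) = 0 := by
    have h0 : ∑ j : Fin n, ∑ i : Fin n,
        (fderiv ℝ ν (x, t) (sdir i)
            * fderiv ℝ (fderiv ℝ (fderiv ℝ ν)) (x, t) (sdir j) (sdir j) (sdir i)
          + fderiv ℝ (fderiv ℝ ν) (x, t) (sdir j) (sdir i)
            * fderiv ℝ (fderiv ℝ ν) (x, t) (sdir j) (sdir i)) = 0 :=
      Finset.sum_eq_zero fun j _ => E8 hν hgrad x t ht j (sdir j)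
    have hfirst : ∑ j : Fin n, ∑ i : Fin n, fderiv ℝ ν (x, t) (sdir i)
        * fderiv ℝ (fderiv ℝ (fderiv ℝ ν)) (x, t) (sdir j) (sdir j) (sdir i) = 0 := by
      calc ∑ j : Fin n, ∑ i : Fin n, fderiv ℝ ν (x, t) (sdir i)
            * fderiv ℝ (fderiv ℝ (fderiv ℝ ν)) (x, t) (sdir j) (sdir j) (sdir i)
          = ∑ i : Fin n, ∑ j : Fin n, fderiv ℝ ν (x, t) (sdir i)
            * fderiv ℝ (fderiv ℝ (fderiv ℝ ν)) (x, t) (sdir i) (sdir j) (sdir j) := by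
            rw [Finset.sum_comm]
            refine Finset.sum_congr rfl fun i _ => Finset.sum_congr rfl fun j _ => ?_
            rw [Tsymm23 hν (x, t) (sdir j) (sdir j) (sdir i),
              Tsymm12 hν (x, t) (sdir j) (sdir i) (sdir j)]
        _ = ∑ i : Fin n, fderiv ℝ ν (x, t) (sdir i)
            * ∑ j : Fin n, fderiv ℝ (fderiv ℝ (fderiv ℝ ν)) (x, t) (sdir i) (sdir j) (sdir j) := by
            simp_rw [Finset.mul_sum]
        _ = ∑ i : Fin n, fderiv ℝ ν (x, t) (sdir i)
            * fderiv ℝ (fderiv ℝ ν) (x, t) (sdir i) tdir := by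
            refine Finset.sum_congr rfl fun i _ => ?_
            rw [E7 hν hheat x t ht (sdir i)]
        _ = ∑ i : Fin n, fderiv ℝ ν (x, t) (sdir i)
            * fderiv ℝ (fderiv ℝ ν) (x, t) tdir (sdir i) := by
            refine Finset.sum_congr rfl fun i _ => ?_
            rw [Bsymm hν (x, t) (sdir i) tdir]
        _ = 0 := E6 hν hgrad x t ht tdir
    simp only [Finset.sum_add_distrib] at h0
    rw [hfirst] at h0
    linarith
  have h1 := (Finset.sum_eq_zero_iff_of_nonneg
    (fun j _ => Finset.sum_nonneg fun i _ => mul_self_nonneg _)).mp hsum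
  intro i j
  have h2 := (Finset.sum_eq_zero_iff_of_nonneg
    (fun i _ => mul_self_nonneg _)).mp (h1 j (Finset.mem_univ j)) i (Finset.mem_univ i)
  exact mul_self_eq_zero.mp h2

lemma Tzero (hν : ContDiff ℝ (⊤ : ℕ∞) ν)
    (hheat : ∀ x t, t ≤ 0 → spatialLap ν x t = timeDeriv ν x t)
    (hgrad : ∀ x t, t ≤ 0 → ‖spatialGrad ν x t‖ = 1) :
    ∀ (x : E) (t : ℝ), t ≤ 0 → ∀ (v : EuclideanSpace ℝ (Fin n) × ℝ) (i j : Fin n),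
      fderiv ℝ (fderiv ℝ (fderiv ℝ ν)) (x, t) v (sdir j) (sdir i) = 0 := by
  have hD := hν.fderiv_right (m := (⊤ : ℕ∞)) (by simp)
  have hB := hD.fderiv_right (m := (⊤ : ℕ∞)) (by simp)
  have hBd := hB.differentiable (by simp)
  intro x t ht v i j
  have hs : ContDiff ℝ (⊤ : ℕ∞) (fun p : P => fderiv ℝ (fderiv ℝ ν) p (sdir j) (sdir i)) :=
    (hB.clm_apply contDiff_const).clm_apply contDiff_const
  have hc := fderiv_zero_on_halfspace hs
    (fun x t ht => Bzero hν hheat hgrad x t ht i j)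
  have h0 := hc x t ht
  rw [(hasFDerivAt_eval2 hBd (sdir j) (sdir i) (x, t)).fderiv] at h0
  have h0v := congrArg (fun A : (EuclideanSpace ℝ (Fin n) × ℝ) →L[ℝ] ℝ => A v) h0
  simpa using h0v

lemma Btau (hν : ContDiff ℝ (⊤ : ℕ∞) ν)
    (hheat : ∀ x t, t ≤ 0 → spatialLap ν x t = timeDeriv ν x t)
    (hgrad : ∀ x t, t ≤ 0 → ‖spatialGrad ν x t‖ = 1) :
    ∀ (x : E) (t : ℝ), t ≤ 0 → ∀ i : Fin n,
      fderiv ℝ (fderiv ℝ ν) (x, t) (sdir i) tdir = 0 := by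
  intro x t ht i
  rw [← E7 hν hheat x t ht (sdir i)]
  exact Finset.sum_eq_zero fun j _ => Tzero hν hheat hgrad x t ht (sdir i) j j

end Vanish

end AncientCaloricAux

open AncientCaloricAux

open scoped RealInnerProductSpace

/-- Liouville step in the proof of Theorem 6.1: a smooth ancient solution of the heat equation
on `ℝⁿ × (−∞,0]` with `|Dν| ≡ 1` satisfies `Dν ≡ a` for a constant unit vector `a`, `∂ₜν ≡ 0`,
and `ν(x,t) = ⟨a,x⟩ + α`. -/
theorem ancient_caloric_unit_gradient {n : ℕ}
    (ν : EuclideanSpace ℝ (Fin n) × ℝ → ℝ) (hν : ContDiff ℝ (⊤ : ℕ∞) ν)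
    (hheat : ∀ x t, t ≤ 0 → spatialLap ν x t = timeDeriv ν x t)
    (hgrad : ∀ x t, t ≤ 0 → ‖spatialGrad ν x t‖ = 1) :
    ∃ (a : EuclideanSpace ℝ (Fin n)) (α : ℝ), ‖a‖ = 1 ∧
      ∀ x t, t ≤ 0 → spatialGrad ν x t = a ∧ timeDeriv ν x t = 0 ∧
        ν (x, t) = ⟪a, x⟫ + α := by
  classical
  have hD := hν.fderiv_right (m := (⊤ : ℕ∞)) (by simp)
  have hDd := hD.differentiable (by simp)
  -- time derivative vanishes
  have hτ0 : ∀ (x : EuclideanSpace ℝ (Fin n)) (t : ℝ), t ≤ 0 →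
      fderiv ℝ ν (x, t) tdir = 0 := by
    intro x t ht
    have h1 : spatialLap ν x t = 0 := by
      rw [spatialLap_eq hν]
      exact Finset.sum_eq_zero fun i _ => Bzero hν hheat hgrad x t ht i i
    rw [← timeDeriv_eq hν, ← hheat x t ht, h1]
  have htime : ∀ x t, t ≤ 0 → timeDeriv ν x t = 0 := fun x t ht => by
    rw [timeDeriv_eq hν]; exact hτ0 x t ht
  -- the spatial gradient is constant
  have hDconst : ∀ (i : Fin n) (x : EuclideanSpace ℝ (Fin n)) (t : ℝ), t ≤ 0 →
      fderiv ℝ ν (x, t) (sdir i) = fderiv ℝ ν (0, 0) (sdir i) := by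
    intro i
    apply const_on_halfspace (hD.clm_apply contDiff_const)
    intro x t ht
    rw [(hasFDerivAt_eval hDd (sdir i) (x, t)).fderiv]
    apply clm_eq_zero_of_basis
    · intro j
      simpa using Bzero hν hheat hgrad x t ht i j
    · have h2 := Bsymm hν (x, t) tdir (sdir i)
      have h3 := Btau hν hheat hgrad x t ht i
      simp only [ContinuousLinearMap.coe_comp', Function.comp_apply,
        ContinuousLinearMap.apply_apply]
      rw [h2, h3]
  set a := spatialGrad ν 0 0 with ha
  have haj : ∀ j, a j = fderiv ℝ ν (0, 0) (sdir j) := fun j => spatialGrad_apply hν 0 0 j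
  refine ⟨a, ν (0, 0), hgrad 0 0 le_rfl, ?_⟩
  intro x t ht
  have hgradeq : spatialGrad ν x t = a := by
    ext i
    rw [spatialGrad_apply hν, hDconst i x t ht]
    exact (haj i).symm
  refine ⟨hgradeq, htime x t ht, ?_⟩
  -- linear formula
  set Li : Fin n → (EuclideanSpace ℝ (Fin n) × ℝ) →L[ℝ] ℝ := fun i =>
    (EuclideanSpace.proj (𝕜 := ℝ) i).comp
      (ContinuousLinearMap.fst ℝ (EuclideanSpace ℝ (Fin n)) ℝ) with hLi
  have hLiapp : ∀ (i : Fin n) (p : EuclideanSpace ℝ (Fin n) × ℝ), Li i p = p.1 i := by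
    intro i p; simp [hLi]
  have hζs : ContDiff ℝ (⊤ : ℕ∞) (fun p : EuclideanSpace ℝ (Fin n) × ℝ =>
      ν p - ∑ i : Fin n, a i * Li i p) :=
    hν.sub (ContDiff.sum fun i _ => contDiff_const.mul (Li i).contDiff)
  have hζd : ∀ p : EuclideanSpace ℝ (Fin n) × ℝ,
      HasFDerivAt (fun p : EuclideanSpace ℝ (Fin n) × ℝ => ν p - ∑ i : Fin n, a i * Li i p)
        (fderiv ℝ ν p - ∑ i : Fin n, a i • Li i) p := fun p =>
    ((hν.differentiable (by simp) p).hasFDerivAt).sub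
      (HasFDerivAt.fun_sum fun i _ => ((Li i).hasFDerivAt).const_mul (a i))
  have hζ0 : ∀ (x : EuclideanSpace ℝ (Fin n)) (t : ℝ), t ≤ 0 →
      fderiv ℝ (fun p : EuclideanSpace ℝ (Fin n) × ℝ =>
        ν p - ∑ i : Fin n, a i * Li i p) (x, t) = 0 := by
    intro x t ht
    rw [(hζd (x, t)).fderiv]
    apply clm_eq_zero_of_basis
    · intro j
      have h1 : ∀ i : Fin n, Li i (sdir j) = if i = j then (1:ℝ) else 0 := by
        intro i
        rw [hLiapp i (sdir j)]
        simp [sdir, EuclideanSpace.single_apply]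
      simp only [ContinuousLinearMap.sub_apply, ContinuousLinearMap.sum_apply,
        ContinuousLinearMap.coe_smul', Pi.smul_apply, smul_eq_mul]
      rw [hDconst j x t ht]
      simp_rw [h1]
      have h2 : ∑ i : Fin n, a i * (if i = j then (1:ℝ) else 0) = a j := by simp
      rw [h2, sub_eq_zero, haj j, Prod.mk_zero_zero]
    · have h1 : ∀ i : Fin n, Li i tdir = 0 := by
        intro i
        rw [hLiapp i tdir]
        simp [tdir]
      simp only [ContinuousLinearMap.sub_apply, ContinuousLinearMap.sum_apply,
        ContinuousLinearMap.coe_smul', Pi.smul_apply, smul_eq_mul]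
      simp_rw [h1]
      simp [hτ0 x t ht]
  have hconst := const_on_halfspace hζs hζ0 x t ht
  have hzero : ∑ i : Fin n, a i * Li i ((0:EuclideanSpace ℝ (Fin n)), (0:ℝ)) = 0 := by
    refine Finset.sum_eq_zero fun i _ => ?_
    rw [hLiapp]
    simp
  have hinner : ⟪a, x⟫ = ∑ i : Fin n, a i * Li i (x, t) := by
    simp_rw [hLiapp]
    simp [PiLp.inner_apply, RCLike.inner_apply, mul_comm]
  rw [hzero] at hconst
  rw [hinner]
  linarith [hconst]


end
end

section
/- Let u be a bounded smooth solution of Δu = ∂ₜu + F'(u) on ℝⁿ × (−∞,0], with F ∈ C² nonnegative, and suppose the Modica estimate |Du|² ≤ 2F(u) holds on ℝⁿ × (−∞,0] (as guaranteed by Theorem 4.1 of the paper). If F(u(x₀,t₀)) = 0 for some point (x₀,t₀), then Du(x,t₀) = 0 for all x, and hence u(x,t₀) = u(x₀,t₀) for all x ∈ ℝⁿ. -/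
open scoped BigOperators

noncomputable section

section Aux
open Set Metric

lemma quad_bound (F : ℝ → ℝ) (hF : ContDiff ℝ 2 F) (hFpos : ∀ s, 0 ≤ F s) (c : ℝ)
    (hc : F c = 0) : ∃ K : NNReal, ∃ δ : ℝ, 0 < δ ∧ ∀ s : ℝ, |s - c| ≤ δ → F s ≤ K * (s - c) ^ 2 := by
  have hd : Differentiable ℝ F := hF.differentiable (by simp)
  have hF'c : deriv F c = 0 := by
    have : IsLocalMin F c := Filter.Eventually.of_forall (fun y => by rw [hc]; exact hFpos y)
    exact this.deriv_eq_zero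
  have hF1 : ContDiff ℝ 1 (deriv F) := by
    have h2 : ContDiff ℝ ((1:ℕ) + 1) F := by exact_mod_cast hF
    exact (contDiff_succ_iff_deriv.mp h2).2.2
  obtain ⟨K, t, ht, hlip⟩ := (hF1.contDiffAt (x := c)).exists_lipschitzOnWith
  obtain ⟨ε, hε, hball⟩ := Metric.mem_nhds_iff.mp ht
  refine ⟨K, ε / 2, by positivity, ?_⟩
  have hder : ∀ τ : ℝ, |τ - c| ≤ ε / 2 → |deriv F τ| ≤ K * |τ - c| := by
    intro τ hτ
    have hτt : τ ∈ t := hball (by simpa [Real.dist_eq] using lt_of_le_of_lt hτ (by linarith))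
    have hct : c ∈ t := hball (by simp [hε])
    have := hlip.dist_le_mul τ hτt c hct
    simpa [Real.dist_eq, hF'c] using this
  intro s hs
  rcases lt_trichotomy c s with h | h | h
  · have key := norm_image_sub_le_of_norm_deriv_le_segment'
      (f := F) (f' := deriv F) (a := c) (b := s) (C := K * (s - c))
      (fun x _ => (hd x).hasDerivAt.hasDerivWithinAt) ?_ s (right_mem_Icc.2 h.le)
    · have hsc : |s - c| = s - c := abs_of_pos (by linarith)
      rw [hc, sub_zero, Real.norm_eq_abs, abs_of_nonneg (hFpos s)] at key
      calc F s ≤ K * (s - c) * (s - c) := key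
        _ = K * (s - c) ^ 2 := by ring
    · intro τ hτ
      have h1 : |τ - c| ≤ ε / 2 := by
        rw [abs_of_nonneg (by linarith [hτ.1])]
        rw [abs_of_pos (by linarith : (0:ℝ) < s - c)] at hs
        linarith [hτ.2]
      have := hder τ h1
      rw [Real.norm_eq_abs]
      refine this.trans ?_
      have : |τ - c| ≤ s - c := by
        rw [abs_of_nonneg (by linarith [hτ.1])]; linarith [hτ.2]
      exact mul_le_mul_of_nonneg_left this K.2
  · subst h; simp [hc]
  · have key := norm_image_sub_le_of_norm_deriv_le_segment'
      (f := F) (f' := deriv F) (a := s) (b := c) (C := K * (c - s))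
      (fun x _ => (hd x).hasDerivAt.hasDerivWithinAt) ?_ c (right_mem_Icc.2 h.le)
    · rw [hc, zero_sub, Real.norm_eq_abs, abs_neg, abs_of_nonneg (hFpos s)] at key
      calc F s ≤ K * (c - s) * (c - s) := by linarith
        _ = K * (s - c) ^ 2 := by ring
    · intro τ hτ
      have h1 : |τ - c| ≤ ε / 2 := by
        rw [abs_of_nonpos (by linarith [hτ.2])]
        rw [abs_of_neg (by linarith : s - c < 0)] at hs
        linarith [hτ.1]
      have := hder τ h1
      rw [Real.norm_eq_abs]
      refine this.trans ?_
      have : |τ - c| ≤ c - s := by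
        rw [abs_of_nonpos (by linarith [hτ.2])]; linarith [hτ.1]
      exact mul_le_mul_of_nonneg_left this K.2

lemma slice_aux {n : ℕ} (v : EuclideanSpace ℝ (Fin n) → ℝ) (F : ℝ → ℝ)
    (hv : ContDiff ℝ (⊤ : ℕ∞) v) (hF : ContDiff ℝ 2 F) (hFpos : ∀ s, 0 ≤ F s)
    (hmod : ∀ x, ‖gradient v x‖ ^ 2 ≤ 2 * F (v x))
    (x₀ : EuclideanSpace ℝ (Fin n)) (hzero : F (v x₀) = 0) :
    ∀ x, gradient v x = 0 ∧ v x = v x₀ := by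
  classical
  set c := v x₀ with hc_def
  have hvd : Differentiable ℝ v := hv.differentiable (by simp)
  obtain ⟨K, δ, hδ, hquad⟩ := quad_bound F hF hFpos c hzero
  have hgradnorm : ∀ z, |v z - c| ≤ δ → ‖gradient v z‖ ≤ Real.sqrt (2 * K) * |v z - c| := by
    intro z hz
    have h1 : ‖gradient v z‖ ^ 2 ≤ 2 * K * (v z - c) ^ 2 := by
      have ha := hmod z
      have hb := hquad (v z) hz
      nlinarith
    calc ‖gradient v z‖ = Real.sqrt (‖gradient v z‖ ^ 2) := (Real.sqrt_sq (norm_nonneg _)).symm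
      _ ≤ Real.sqrt (2 * K * (v z - c) ^ 2) := Real.sqrt_le_sqrt h1
      _ = Real.sqrt (2 * K) * |v z - c| := by
          rw [Real.sqrt_mul (by positivity), Real.sqrt_sq_eq_abs]
  have hinner : ∀ z (w : EuclideanSpace ℝ (Fin n)),
      |fderiv ℝ v z w| ≤ ‖gradient v z‖ * ‖w‖ := by
    intro z w
    have h := ((hvd z).hasGradientAt).hasFDerivAt.fderiv
    rw [h, InnerProductSpace.toDual_apply_apply]
    exact abs_real_inner_le_norm _ _
  have hZopen : IsOpen {x | v x = c} := by
    rw [Metric.isOpen_iff]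
    intro x₁ hx₁
    obtain ⟨r, hr, hrb⟩ := Metric.continuousAt_iff.mp (hv.continuous.continuousAt (x := x₁)) δ hδ
    refine ⟨r, hr, fun y hy => ?_⟩
    set w := y - x₁ with hw
    set γ : ℝ → EuclideanSpace ℝ (Fin n) := fun s => x₁ + s • w with hγ
    have hγmem : ∀ s ∈ Icc (0:ℝ) 1, dist (γ s) x₁ < r := by
      intro s hs
      have hd : dist (γ s) x₁ = s * ‖w‖ := by
        simp [hγ, dist_eq_norm, norm_smul, abs_of_nonneg hs.1]
      rw [hd]
      calc s * ‖w‖ ≤ 1 * ‖w‖ := mul_le_mul_of_nonneg_right hs.2 (norm_nonneg _)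
        _ = dist y x₁ := by rw [one_mul, dist_eq_norm]
        _ < r := hy
    have hsmall : ∀ s ∈ Icc (0:ℝ) 1, |v (γ s) - c| ≤ δ := by
      intro s hs
      have := hrb (hγmem s hs)
      rw [hx₁] at this
      rw [Real.dist_eq] at this
      exact this.le
    set L := 2 * Real.sqrt (2 * K) * ‖w‖ with hL
    set f : ℝ → ℝ := fun s => (v (γ s) - c) ^ 2 with hf
    set f' : ℝ → ℝ := fun s => 2 * (v (γ s) - c) ^ 1 * fderiv ℝ v (γ s) w with hf'
    have hγc : Continuous γ := by continuity
    have hderiv : ∀ s : ℝ, HasDerivAt f (f' s) s := by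
      intro s
      have hγd : HasDerivAt γ w s := by
        exact (by simpa using ((hasDerivAt_id s).smul_const w) : HasDerivAt (fun y : ℝ => y • w) w s).const_add x₁
      have hcomp : HasDerivAt (fun s => v (γ s)) (fderiv ℝ v (γ s) w) s :=
        (hvd (γ s)).hasFDerivAt.comp_hasDerivAt s hγd
      have := (hcomp.sub_const c).pow 2
      simpa [hf, hf', Pi.pow_def] using this
    have hbound : ∀ s ∈ Ico (0:ℝ) 1, ‖f' s‖ ≤ L * ‖f s‖ + 0 := by
      intro s hs
      have hsI : s ∈ Icc (0:ℝ) 1 := Ico_subset_Icc_self hs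
      have h1 := hgradnorm (γ s) (hsmall s hsI)
      have h2 := hinner (γ s) w
      rw [Real.norm_eq_abs, Real.norm_eq_abs, add_zero]
      have habs : |f s| = (v (γ s) - c) ^ 2 := abs_of_nonneg (by positivity)
      rw [habs]
      have hkey : |f' s| ≤ 2 * |v (γ s) - c| * (Real.sqrt (2 * K) * |v (γ s) - c| * ‖w‖) := by
        have e1 : |f' s| = 2 * |v (γ s) - c| * |fderiv ℝ v (γ s) w| := by
          simp only [hf', pow_one, abs_mul, abs_two]
        rw [e1]
        have h3 : |fderiv ℝ v (γ s) w| ≤ Real.sqrt (2 * K) * |v (γ s) - c| * ‖w‖ := by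
          calc |fderiv ℝ v (γ s) w| ≤ ‖gradient v (γ s)‖ * ‖w‖ := h2
            _ ≤ Real.sqrt (2 * K) * |v (γ s) - c| * ‖w‖ :=
              mul_le_mul_of_nonneg_right h1 (norm_nonneg _)
        exact mul_le_mul_of_nonneg_left h3 (by positivity)
      refine hkey.trans (le_of_eq ?_)
      rw [hL, ← sq_abs (v (γ s) - c)]
      ring
    have hcont : ContinuousOn f (Icc 0 1) :=
      (((hv.continuous.comp hγc).sub continuous_const).pow 2).continuousOn
    have hx₁' : v x₁ = c := hx₁
    have h0 : ‖f 0‖ ≤ 0 := by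
      have hγ0 : γ 0 = x₁ := by simp [hγ]
      simp [hf, hγ0, hx₁']
    have hg := norm_le_gronwallBound_of_norm_deriv_right_le hcont
      (fun s _ => (hderiv s).hasDerivWithinAt) h0 hbound 1 (right_mem_Icc.2 zero_le_one)
    rw [gronwallBound_ε0_δ0] at hg
    have hγ1 : γ 1 = y := by simp [hγ, hw]
    have hf1 : (v y - c) ^ 2 = 0 := by
      have h4 : f 1 = 0 := by
        have := hg.antisymm (norm_nonneg _)
        rwa [Real.norm_eq_abs, abs_eq_zero] at this
      calc (v y - c) ^ 2 = f 1 := by rw [hf]; simp [hγ1]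
        _ = 0 := h4
    have : v y - c = 0 := by
      exact pow_eq_zero_iff (two_ne_zero) |>.mp hf1
    exact sub_eq_zero.mp this
  have hZclosed : IsClosed {x | v x = c} := isClosed_eq hv.continuous continuous_const
  have hZuniv : {x : EuclideanSpace ℝ (Fin n) | v x = c} = univ :=
    (IsClopen.eq_univ ⟨hZclosed, hZopen⟩ ⟨x₀, rfl⟩)
  intro x
  have hxZ : v x = c := by
    have : x ∈ ({x | v x = c} : Set _) := hZuniv ▸ mem_univ x
    exact this
  refine ⟨?_, hxZ⟩
  have h := hmod x
  rw [hxZ, hzero, mul_zero] at h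
  have : ‖gradient v x‖ = 0 := by nlinarith [norm_nonneg (gradient v x)]
  simpa using this

end Aux

/-- Corollary 4.2 (propagation of zeros): if a bounded solution of `Δu = ∂ₜu + F'(u)` on
`ℝⁿ × (−∞,0]` satisfies the Modica estimate `|Du|² ≤ 2F(u)` there, and `F(u(x₀,t₀)) = 0` at
some point, then `Du(·,t₀) ≡ 0` and `u(·,t₀) ≡ u(x₀,t₀)`. -/
theorem propagation_of_zeros {n : ℕ} (u : EuclideanSpace ℝ (Fin n) × ℝ → ℝ) (F : ℝ → ℝ)
    (hu : ContDiff ℝ (⊤ : ℕ∞) u) (hbd : ∃ C : ℝ, ∀ p, |u p| ≤ C)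
    (hF : ContDiff ℝ 2 F) (hFpos : ∀ s, 0 ≤ F s)
    (heq : ∀ x t, t ≤ 0 → spatialLap u x t = timeDeriv u x t + deriv F (u (x, t)))
    (hmodica : ∀ x t, t ≤ 0 → ‖spatialGrad u x t‖ ^ 2 ≤ 2 * F (u (x, t)))
    (x₀ : EuclideanSpace ℝ (Fin n)) (t₀ : ℝ) (ht₀ : t₀ ≤ 0)
    (hzero : F (u (x₀, t₀)) = 0) :
    ∀ x, spatialGrad u x t₀ = 0 ∧ u (x, t₀) = u (x₀, t₀) := by
  intro x
  exact slice_aux (fun y => u (y, t₀)) F (hu.comp (contDiff_id.prodMk contDiff_const)) hF hFpos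
    (fun z => hmodica z t₀ ht₀) x₀ hzero x

end
end
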